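/- Let G be an infinite, locally finite graph, let U : E → [0,1] be injective, and let A ⊆ E be a finite set of edges. Define Ũ(e) := 1 for e ∈ A and Ũ(e) := U(e) for e ∉ A. Then A ∩ F_f(U) = ∅ if and only if U(e) > Z_f^{Ũ}(e) for every e ∈ A, where Z_f^{Ũ}(e) := inf over simple paths P in G \ {e} connecting the endpoints of e of max{Ũ(e') : e' ∈ P} (and := +∞ if no such path exists). Moreover, if A ∩ F_f(U) = ∅, then Z_f^{U}(e) = Z_f^{Ũ}(e) for every e ∈ A and F_f(U) = F_f(Ũ). -/

import Mathlib

open SimpleGraph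

/-- The set of edges of `G` whose endpoints cannot be joined by a path all of whose
edges have strictly smaller label: the (free) minimal spanning forest / tree of `G`. -/
def mstEdges {V α : Type*} [LinearOrder α] (G : SimpleGraph V) (U : Sym2 V → α) :
    Set (Sym2 V) :=
  {e | e ∈ G.edgeSet ∧ ∀ a b : V, e = s(a, b) →
    ∀ p : G.Walk a b, p.IsPath → ∃ f ∈ p.edges, U e ≤ U f}

/-- A one-sided infinite simple path in `G`. -/
def IsRay {V : Type*} (G : SimpleGraph V) (r : ℕ → V) : Prop :=
  Function.Injective r ∧ ∀ n : ℕ, G.Adj (r n) (r (n + 1))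

/-- The edges of a one-sided infinite path. -/
def rayEdges {V : Type*} (r : ℕ → V) : Set (Sym2 V) :=
  Set.range fun n : ℕ => s(r n, r (n + 1))

/-- The wired minimal spanning forest of `G`: edges such that every extended path
(finite simple path, or pair of disjoint rays from the two endpoints) joining the
endpoints contains an edge of label at least as large. -/
def wmsfEdges {V : Type*} (G : SimpleGraph V) (U : Sym2 V → ℝ) : Set (Sym2 V) :=
  {e | e ∈ G.edgeSet ∧ ∀ a b : V, e = s(a, b) →
    (∀ p : G.Walk a b, p.IsPath → ∃ f ∈ p.edges, U e ≤ U f) ∧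
    (∀ r₁ r₂ : ℕ → V, IsRay G r₁ → IsRay G r₂ → r₁ 0 = a → r₂ 0 = b →
      (∀ m n : ℕ, r₁ m ≠ r₂ n) →
      ∃ f ∈ rayEdges r₁ ∪ rayEdges r₂, U e ≤ U f)}

/-- The edges of `G` joining `W` to its complement. -/
def cutEdges {V : Type*} (G : SimpleGraph V) (W : Set V) : Set (Sym2 V) :=
  {e | e ∈ G.edgeSet ∧ ∃ a b : V, e = s(a, b) ∧ a ∈ W ∧ b ∉ W}

/-- A bi-infinite simple path in `G`. -/
def IsBiRay {V : Type*} (G : SimpleGraph V) (r : ℤ → V) : Prop :=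
  Function.Injective r ∧ ∀ n : ℤ, G.Adj (r n) (r (n + 1))

/-- The edges of a bi-infinite simple path. -/
def biRayEdges {V : Type*} (r : ℤ → V) : Set (Sym2 V) :=
  Set.range fun n : ℤ => s(r n, r (n + 1))

/-- The maximum label along a list of edges, as an extended real. -/
noncomputable def listMaxE {V : Type*} (U : Sym2 V → ℝ) (L : List (Sym2 V)) : EReal :=
  sSup {y : EReal | ∃ f ∈ L, y = (U f : EReal)}

/-- `Z_f^W(e)` for a labeling `W`: the infimum over simple paths in `G \ {e}`
connecting the endpoints of `e` of the maximum label along the path, `+∞`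
(`= sInf ∅` in `EReal`) if there is no such path. -/
noncomputable def ZfE {V : Type*} (G : SimpleGraph V) (W : Sym2 V → ℝ) (e : Sym2 V) :
    EReal :=
  sInf {x : EReal | ∃ (a b : V) (p : G.Walk a b), e = s(a, b) ∧ p.IsPath ∧
    e ∉ p.edges ∧ x = listMaxE W p.edges}

/-!
If no edge of `A` lies in `F_f(U)`, every `f ∈ A` is bypassed by a walk whose labels are all
below `U f`. Splicing these bypasses in, by induction on the number of edges of `A` with label
below the threshold, turns any walk with labels below `c` into one with labels below `c` that
avoids `A`, and off `A` the raised labelling `Ũ` agrees with `U`. This gives `Z_f^Ũ(e) < U e`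
on `A`, `Z_f^Ũ ≤ Z_f^U` on `A`, and `F_f(Ũ) ⊆ F_f(U)`; the reverse statements only use
`U ≤ Ũ`, which holds because `U ≤ 1`.
-/

section

variable {V : Type*}

section listMaxE

variable {U W : Sym2 V → ℝ} {L : List (Sym2 V)}

lemma le_listMaxE (U : Sym2 V → ℝ) {f : Sym2 V} (hf : f ∈ L) :
    (U f : EReal) ≤ listMaxE U L :=
  le_sSup ⟨f, hf, rfl⟩

lemma listMaxE_lt {c : EReal} (hc : ⊥ < c) (h : ∀ f ∈ L, (U f : EReal) < c) :
    listMaxE U L < c := by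
  classical
  have hsup : listMaxE U L = L.toFinset.sup fun f => (U f : EReal) := by
    rw [listMaxE, Finset.sup_eq_sSup_image]
    congr 1
    ext
    simp [eq_comm]
  rw [hsup]
  exact (Finset.sup_lt_iff hc).2 fun f hf => h f (List.mem_toFinset.1 hf)

lemma listMaxE_mono (h : ∀ f ∈ L, U f ≤ W f) : listMaxE U L ≤ listMaxE W L :=
  sSup_le fun _ ⟨f, hf, hy⟩ => hy ▸ (EReal.coe_le_coe_iff.2 (h f hf)).trans (le_listMaxE W hf)

end listMaxE

theorem SimpleGraph.Walk.reachable_of_forall_mem_edges {G H : SimpleGraph V} {a b : V}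
    (p : G.Walk a b) (h : ∀ x y, s(x, y) ∈ p.edges → H.Reachable x y) : H.Reachable a b := by
  induction p with
  | nil => rfl
  | cons _ p ih => exact (h _ _ (by simp)).trans (ih fun x y hxy => h x y (by simp [hxy]))

section LinearOrder

variable {α : Type*} [LinearOrder α] {G : SimpleGraph V} {U : Sym2 V → α}

lemma notMem_mstEdges_iff {e : Sym2 V} (he : e ∈ G.edgeSet) :
    e ∉ mstEdges G U ↔
      ∃ a b, e = s(a, b) ∧ ∃ p : G.Walk a b, ∀ g ∈ p.edges, U g < U e := by
  classical
  refine ⟨fun h => ?_, ?_⟩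
  · have h' : ¬ ∀ a b : V, e = s(a, b) → ∀ p : G.Walk a b, p.IsPath →
        ∃ f ∈ p.edges, U e ≤ U f := fun h' => h ⟨he, h'⟩
    push Not at h'
    obtain ⟨a, b, hab, p, -, hp⟩ := h'
    exact ⟨a, b, hab, p, hp⟩
  · rintro ⟨a, b, hab, p, hp⟩ ⟨-, h⟩
    obtain ⟨g, hg, hge⟩ := h a b hab p.bypass p.bypass_isPath
    exact (hp g (p.edges_bypass_subset_edges hg)).not_ge hge

variable {A : Finset (Sym2 V)}
  (hlow : ∀ f ∈ A, ∃ a b, f = s(a, b) ∧ ∃ p : G.Walk a b, ∀ g ∈ p.edges, U g < U f)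
include hlow

theorem reachable_deleteEdges_of_walk (c : α) {a b : V} (p : G.Walk a b)
    (hp : ∀ g ∈ p.edges, U g < c) :
    (G.deleteEdges {g | g ∈ A ∨ c ≤ U g}).Reachable a b := by
  induction hn : (A.filter fun f => U f < c).card using Nat.strong_induction_on
    generalizing c a b with
  | _ n ih =>
  refine p.reachable_of_forall_mem_edges fun x y hxy => ?_
  have hlt := hp _ hxy
  by_cases hxyA : s(x, y) ∈ A
  · obtain ⟨a', b', hf, q, hq⟩ := hlow _ hxyA
    have hsub : (A.filter fun f => U f < U s(x, y)) ⊂ A.filter fun f => U f < c := by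
      refine (Finset.ssubset_iff_of_subset fun g hg => ?_).2 ⟨s(x, y), ?_, ?_⟩
      · rw [Finset.mem_filter] at hg ⊢
        exact ⟨hg.1, hg.2.trans hlt⟩
      · exact Finset.mem_filter.2 ⟨hxyA, hlt⟩
      · simp
    have hq' := (ih _ (hn ▸ Finset.card_lt_card hsub) _ q hq rfl).mono
      (deleteEdges_anti fun _ hg => Or.imp_right hlt.le.trans hg)
    rcases Sym2.eq_iff.1 hf with ⟨rfl, rfl⟩ | ⟨rfl, rfl⟩
    exacts [hq', hq'.symm]
  · exact Adj.reachable ((deleteEdges_adj ..).2 ⟨p.adj_of_mem_edges hxy, by simp [hxyA, hlt]⟩)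

theorem exists_isPath_avoiding_of_walk (c : α) {a b : V} (p : G.Walk a b)
    (hp : ∀ g ∈ p.edges, U g < c) :
    ∃ q : G.Walk a b, q.IsPath ∧ ∀ g ∈ q.edges, g ∉ A ∧ U g < c := by
  classical
  obtain ⟨q⟩ := reachable_deleteEdges_of_walk hlow c p hp
  let r := q.mapLe (deleteEdges_le _)
  refine ⟨r.bypass, r.bypass_isPath, fun g hg => ?_⟩
  have hgq : g ∈ q.edges :=
    q.edges_mapLe_eq_edges (deleteEdges_le _) ▸ r.edges_bypass_subset_edges hg
  have := q.edges_subset_edgeSet hgq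
  rw [edgeSet_deleteEdges] at this
  simpa using this.2

end LinearOrder

section ZfE

variable {G : SimpleGraph V} {U W : Sym2 V → ℝ} {e : Sym2 V}

lemma ZfE_le_listMaxE (W : Sym2 V → ℝ) {a b : V} (p : G.Walk a b) (hab : e = s(a, b))
    (hp : p.IsPath) (he : e ∉ p.edges) : ZfE G W e ≤ listMaxE W p.edges :=
  sInf_le ⟨a, b, p, hab, hp, he, rfl⟩

lemma ZfE_mono (h : ∀ g ∈ G.edgeSet, U g ≤ W g) (e : Sym2 V) : ZfE G U e ≤ ZfE G W e := by
  refine le_sInf ?_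
  rintro _ ⟨a, b, p, hab, hp, he, rfl⟩
  exact (ZfE_le_listMaxE U p hab hp he).trans
    (listMaxE_mono fun g hg => h g (p.edges_subset_edgeSet hg))

lemma coe_le_ZfE_of_mem_mstEdges (h : ∀ g ∈ G.edgeSet, U g ≤ W g) (he : e ∈ mstEdges G U) :
    (U e : EReal) ≤ ZfE G W e := by
  refine le_sInf ?_
  rintro _ ⟨a, b, p, hab, hp, -, rfl⟩
  obtain ⟨g, hg, hge⟩ := he.2 a b hab p hp
  exact (EReal.coe_le_coe_iff.2 (hge.trans (h g (p.edges_subset_edgeSet hg)))).trans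
    (le_listMaxE W hg)

variable {A : Finset (Sym2 V)}
  (hlow : ∀ f ∈ A, ∃ a b, f = s(a, b) ∧ ∃ p : G.Walk a b, ∀ g ∈ p.edges, U g < U f)
  (hWA : ∀ g ∉ A, W g = U g)
include hlow hWA

lemma ZfE_lt_of_walk (heA : e ∈ A) {a b : V} (hab : e = s(a, b)) (p : G.Walk a b) {c : ℝ}
    (hp : ∀ g ∈ p.edges, U g < c) : ZfE G W e < c := by
  obtain ⟨q, hq, hqA⟩ := exists_isPath_avoiding_of_walk hlow c p hp
  refine (ZfE_le_listMaxE W q hab hq fun h => (hqA e h).1 heA).trans_lt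
    (listMaxE_lt (EReal.bot_lt_coe c) fun g hg => ?_)
  rw [hWA g (hqA g hg).1]
  exact EReal.coe_lt_coe_iff.2 (hqA g hg).2

lemma ZfE_le_ZfE_of_mem (heA : e ∈ A) : ZfE G W e ≤ ZfE G U e := by
  refine le_sInf ?_
  rintro _ ⟨a, b, p, hab, -, -, rfl⟩
  refine EReal.le_of_forall_lt_iff_le.1 fun c hc =>
    (ZfE_lt_of_walk hlow hWA heA hab p fun g hg => ?_).le
  exact EReal.coe_lt_coe_iff.1 ((le_listMaxE U hg).trans_lt hc)

lemma mstEdges_eq_mstEdges (hUW : ∀ g ∈ G.edgeSet, U g ≤ W g) :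
    mstEdges G U = mstEdges G W := by
  ext e
  refine ⟨fun he => ⟨he.1, fun a b hab p hp => ?_⟩, fun he => ?_⟩
  · have heA : e ∉ A := fun h => (notMem_mstEdges_iff he.1).2 (hlow e h) he
    obtain ⟨g, hg, hge⟩ := he.2 a b hab p hp
    refine ⟨g, hg, ?_⟩
    rw [hWA e heA]
    exact hge.trans (hUW g (p.edges_subset_edgeSet hg))
  · by_contra hU
    obtain ⟨a, b, hab, p, hp⟩ := (notMem_mstEdges_iff he.1).1 hU
    obtain ⟨q, hq, hqA⟩ := exists_isPath_avoiding_of_walk hlow (U e) p hp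
    obtain ⟨g, hg, hge⟩ := he.2 a b hab q hq
    rw [hWA g (hqA g hg).1] at hge
    linarith [(hqA g hg).2, hUW e he.1]

end ZfE

end

theorem stmt18_general {V : Type*} [DecidableEq V] (G : SimpleGraph V)
    (U : Sym2 V → ℝ)
    (hU01 : ∀ e ∈ G.edgeSet, U e ∈ Set.Icc (0 : ℝ) 1)
    (A : Finset (Sym2 V)) (hA : ↑A ⊆ G.edgeSet) :
    ((↑A ∩ mstEdges G U = (∅ : Set (Sym2 V))) ↔
      ∀ e ∈ A, ZfE G (fun f => if f ∈ A then 1 else U f) e < ((U e : ℝ) : EReal)) ∧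
    (↑A ∩ mstEdges G U = (∅ : Set (Sym2 V)) →
      (∀ e ∈ A, ZfE G U e = ZfE G (fun f => if f ∈ A then 1 else U f) e) ∧
      mstEdges G U = mstEdges G (fun f => if f ∈ A then 1 else U f)) := by
  set W : Sym2 V → ℝ := fun f => if f ∈ A then 1 else U f
  have hWA : ∀ g ∉ A, W g = U g := fun g hg => if_neg hg
  have hUW : ∀ g ∈ G.edgeSet, U g ≤ W g := fun g hg => by
    by_cases h : g ∈ A
    · simpa [W, h] using (hU01 g hg).2
    · exact (hWA g h).ge
  have hlow (hd : ↑A ∩ mstEdges G U = ∅) :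
      ∀ f ∈ A, ∃ a b, f = s(a, b) ∧ ∃ p : G.Walk a b, ∀ g ∈ p.edges, U g < U f :=
    fun f hf => (notMem_mstEdges_iff (hA hf)).1 fun hm =>
      Set.eq_empty_iff_forall_notMem.1 hd f ⟨hf, hm⟩
  refine ⟨⟨fun hd e he => ?_, fun hZ => ?_⟩,
    fun hd => ⟨fun e he => ?_, mstEdges_eq_mstEdges (hlow hd) hWA hUW⟩⟩
  · obtain ⟨a, b, hab, p, hp⟩ := hlow hd e he
    exact ZfE_lt_of_walk (hlow hd) hWA he hab p hp
  · exact Set.eq_empty_iff_forall_notMem.2 fun e ⟨he, hm⟩ =>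
      (hZ e he).not_ge (coe_le_ZfE_of_mem_mstEdges hUW hm)
  · exact le_antisymm (ZfE_mono hUW e) (ZfE_le_ZfE_of_mem (hlow hd) hWA he)

/-- Let `A` be a finite set of edges of an infinite locally finite
graph `G` with injective labels `U : E → [0,1]`, and let `Ũ` be `1` on `A` and
`U` elsewhere. Then `A` is disjoint from the free minimal spanning forest of `U`
iff `U(e) > Z_f^{Ũ}(e)` for every `e ∈ A`; and in that case `Z_f^U = Z_f^{Ũ}`
on `A` and `F_f(U) = F_f(Ũ)`. -/
theorem stmt18 {V : Type*} [Infinite V] [DecidableEq V] (G : SimpleGraph V)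
    (hlf : ∀ v : V, (G.neighborSet v).Finite)
    (U : Sym2 V → ℝ) (hU : Set.InjOn U G.edgeSet)
    (hU01 : ∀ e ∈ G.edgeSet, U e ∈ Set.Icc (0 : ℝ) 1)
    (A : Finset (Sym2 V)) (hA : ↑A ⊆ G.edgeSet) :
    ((↑A ∩ mstEdges G U = (∅ : Set (Sym2 V))) ↔
      ∀ e ∈ A, ZfE G (fun f => if f ∈ A then 1 else U f) e < ((U e : ℝ) : EReal)) ∧
    (↑A ∩ mstEdges G U = (∅ : Set (Sym2 V)) →
      (∀ e ∈ A, ZfE G U e = ZfE G (fun f => if f ∈ A then 1 else U f) e) ∧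
      mstEdges G U = mstEdges G (fun f => if f ∈ A then 1 else U f)) :=
  stmt18_general G U hU01 A hA
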